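/- arXiv:1802.05732 — 5 statements merged into one kernel-verified Lean document; each statement's English description precedes it below -/
import Mathlib

section
/- The map γ ↦ γ + ψ(γ) is strictly increasing on Γ_log ∖ {0}: for all nonzero α, β ∈ Γ_log with α < β, one has α + ψ(α) < β + ψ(β). -/
noncomputable section

/-- Γ_log : the additive group of finitely supported functions ℕ → ℝ,
linearly ordered lexicographically. -/
abbrev GammaLog : Type := Lex (ℕ →₀ ℝ)

/-- χ_[0,n] : the characteristic function of {0,…,n}. -/
def chiI (n : ℕ) : GammaLog :=
  toLex (Finsupp.indicator (Finset.range (n + 1)) fun _ _ => (1 : ℝ))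

/-- For nonzero α, ψ(α) = χ_[0,n] where n is the least index with α(n) ≠ 0
(junk value when α = 0). -/
def psiL (α : GammaLog) : GammaLog := chiI (sInf {n : ℕ | ofLex α n ≠ 0})


/-! Let `a`, `b` be the least indices where `α`, `β` are nonzero. If `a = b` then
`ψ(α) = ψ(β)` and there is nothing to prove. Otherwise `α` and `β` first differ at an index
`n ≤ min a b`: below `min a b` both vanish, and at `min a b` exactly one of them does not. Since
`ψ(α)` and `ψ(β)` both equal `1` on `[0, n]`, adding them does not change the comparison at `n`. -/

theorem Finsupp.Lex.add_lt_add_of_eqOn_Iic {ι N : Type*} [LinearOrder ι] [AddCommGroup N]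
    [LinearOrder N] [IsOrderedAddMonoid N] {x y u v : Lex (ι →₀ N)} (n : ι)
    (hxy : ∀ j < n, ofLex x j = ofLex y j) (hn : ofLex x n < ofLex y n)
    (huv : ∀ j ≤ n, ofLex u j = ofLex v j) : x + u < y + v := by
  refine Finsupp.Lex.lt_iff.mpr ⟨n, fun j hj => ?_, ?_⟩
  · simp only [ofLex_add, Finsupp.add_apply, hxy j hj, huv j hj.le]
  · simpa only [ofLex_add, Finsupp.add_apply, huv n le_rfl] using add_lt_add_left hn _

theorem Finsupp.min_sInf_ne_zero_le {M : Type*} [Zero M] {f g : ℕ →₀ M} {n : ℕ} (hg : g ≠ 0)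
    (hfg : ∀ j < n, f j = g j) :
    min n (sInf {j | f j ≠ 0}) ≤ sInf {j | g j ≠ 0} := by
  have hg_min : g (sInf {j | g j ≠ 0}) ≠ 0 := Nat.sInf_mem (Finsupp.ne_iff.mp hg)
  rcases lt_or_ge (sInf {j | g j ≠ 0}) n with hlt | hle
  · exact min_le_of_right_le (Nat.sInf_le (by rwa [Set.mem_ofPred_eq, hfg _ hlt]))
  · exact min_le_of_left_le hle

theorem ofLex_chiI_of_le {n j : ℕ} (h : j ≤ n) : ofLex (chiI n) j = 1 := by
  simp [chiI, Finsupp.indicator_apply, Nat.lt_add_one_of_le h]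

/-- γ ↦ γ + ψ(γ) is strictly increasing on Γ_log ∖ {0}. -/
theorem add_psiL_strictMono (α β : GammaLog) (hα : α ≠ 0) (hβ : β ≠ 0)
    (h : α < β) :
    α + psiL α < β + psiL β := by
  obtain ⟨n, hαβ, hn⟩ := Finsupp.Lex.lt_iff.mp h
  rw [psiL, psiL]
  set a := sInf {j | ofLex α j ≠ 0}
  set b := sInf {j | ofLex β j ≠ 0}
  rcases eq_or_ne a b with hab | hab
  · rw [hab]
    exact add_lt_add_left h _
  · have hab_min : min n a ≤ b := Finsupp.min_sInf_ne_zero_le hβ hαβ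
    have hba_min : min n b ≤ a := Finsupp.min_sInf_ne_zero_le hα fun j hj => (hαβ j hj).symm
    refine Finsupp.Lex.add_lt_add_of_eqOn_Iic n hαβ hn fun j hj => ?_
    rw [ofLex_chiI_of_le (by omega), ofLex_chiI_of_le (by omega)]
end
end

section
/- (Γ_log, ψ) has asymptotic integration, with explicit integrals: for every α ∈ Γ_log, letting n(α) be the least index with α(n(α)) ≠ 1 (which exists by finite support), the element β := α − χ_[0,n(α)] is nonzero and satisfies β + ψ(β) = α; moreover β is the unique nonzero element of Γ_log with β + ψ(β) = α. -/
noncomputable section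

/-- n(α) : the least index with α(n(α)) ≠ 1 (the defining set is nonempty by
finite support). -/
def nuOne (α : GammaLog) : ℕ := sInf {n : ℕ | ofLex α n ≠ 1}

/-- ∫α := α − χ_[0,n(α)]. -/
def intL (α : GammaLog) : GammaLog := α - chiI (nuOne α)

/-- s(α) := ψ(∫α). -/
def sL (α : GammaLog) : GammaLog := psiL (intL α)

lemma chiI_apply (n m : ℕ) : ofLex (chiI n) m = if m ≤ n then 1 else 0 := by
  show (Finsupp.indicator (Finset.range (n + 1)) fun _ _ => (1 : ℝ)) m = _
  rw [Finsupp.indicator_apply]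
  simp [Nat.lt_succ_iff]

lemma sub_apply' (a b : GammaLog) (m : ℕ) : ofLex (a - b) m = ofLex a m - ofLex b m := rfl

lemma add_apply' (a b : GammaLog) (m : ℕ) : ofLex (a + b) m = ofLex a m + ofLex b m := rfl

lemma nuOne_spec (α : GammaLog) :
    ofLex α (nuOne α) ≠ 1 ∧ ∀ m < nuOne α, ofLex α m = 1 := by
  have hne : {n : ℕ | ofLex α n ≠ 1}.Nonempty := by
    obtain ⟨n, hn⟩ := Infinite.exists_notMem_finset (ofLex α).support
    exact ⟨n, by simp [Finsupp.notMem_support_iff.mp hn]⟩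
  constructor
  · exact Nat.sInf_mem hne
  · intro m hm
    by_contra h
    exact absurd hm (not_lt.mpr (Nat.sInf_le h))

lemma psiL_eq (β : GammaLog) (n : ℕ) (hn : ofLex β n ≠ 0) (h : ∀ m < n, ofLex β m = 0) :
    psiL β = chiI n := by
  have : sInf {m : ℕ | ofLex β m ≠ 0} = n := by
    refine le_antisymm (Nat.sInf_le hn) (le_of_not_gt fun hlt => ?_)
    have hmem := Nat.sInf_mem (⟨n, hn⟩ : Set.Nonempty {m : ℕ | ofLex β m ≠ 0})
    exact hmem (h _ hlt)
  rw [psiL, this]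

/-- (Γ_log, ψ) has asymptotic integration, with explicit integrals:
n(α) really is the least index with value ≠ 1, β := α − χ_[0,n(α)] is nonzero,
β + ψ(β) = α, and β is the unique nonzero element with this property. -/
theorem asymptotic_integration (α : GammaLog) :
    (ofLex α (nuOne α) ≠ 1 ∧ ∀ m < nuOne α, ofLex α m = 1) ∧
    α - chiI (nuOne α) ≠ 0 ∧
    (α - chiI (nuOne α)) + psiL (α - chiI (nuOne α)) = α ∧
    (∀ γ : GammaLog, γ ≠ 0 → γ + psiL γ = α → γ = α - chiI (nuOne α)) := by
  obtain ⟨h1, h2⟩ := nuOne_spec α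
  set n := nuOne α with hn
  set β := α - chiI n with hβ
  have hβn : ofLex β n ≠ 0 := by
    rw [hβ, sub_apply', chiI_apply, if_pos le_rfl]
    exact sub_ne_zero.mpr h1
  have hβm : ∀ m < n, ofLex β m = 0 := by
    intro m hm
    rw [hβ, sub_apply', chiI_apply, if_pos hm.le, h2 m hm, sub_self]
  have hψ : psiL β = chiI n := psiL_eq β n hβn hβm
  refine ⟨⟨h1, h2⟩, ?_, ?_, ?_⟩
  · intro h0
    apply hβn
    rw [h0]; rfl
  · rw [hψ]; exact sub_add_cancel α (chiI n)
  · intro γ hγ0 hγ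
    have hne : {m : ℕ | ofLex γ m ≠ 0}.Nonempty := by
      by_contra h
      rw [Set.not_nonempty_iff_eq_empty, Set.eq_empty_iff_forall_notMem] at h
      simp only [Set.mem_setOf_eq, not_not] at h
      exact hγ0 (Finsupp.ext h)
    set k := sInf {m : ℕ | ofLex γ m ≠ 0} with hk
    have hγk : ofLex γ k ≠ 0 := Nat.sInf_mem hne
    have hγm : ∀ m < k, ofLex γ m = 0 := fun m hm => by
      by_contra h; exact absurd hm (not_lt.mpr (Nat.sInf_le h))
    have hψγ : psiL γ = chiI k := psiL_eq γ k hγk hγm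
    rw [hψγ] at hγ
    -- show k = n
    have hαk : ofLex α k ≠ 1 := by
      rw [← hγ, add_apply', chiI_apply, if_pos le_rfl]
      intro h; exact hγk (by linarith)
    have hαm : ∀ m < k, ofLex α m = 1 := fun m hm => by
      rw [← hγ, add_apply', chiI_apply, if_pos hm.le, hγm m hm, zero_add]
    have h_le : n ≤ k := Nat.sInf_le hαk
    have h_ge : k ≤ n := le_of_not_gt fun hlt => h1 (hαm n hlt)
    have hkn : k = n := le_antisymm h_ge h_le
    show γ = α - chiI n
    rw [← hkn]
    exact eq_sub_of_add_eq hγ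
end
end

section
/- In Γ_log: for every n ∈ ℕ, s(χ_[0,n]) = χ_[0,n+1]; consequently, for every α ∈ Ψ one has α < s(α) ∈ Ψ, there is no element of Ψ strictly between α and s(α) (s(α) is the immediate successor of α in Ψ), and α ↦ s(α) is a bijection from Ψ onto {β ∈ Ψ : β > s(0)}. Hence (Γ_log, ψ) is a model of T_log. -/
noncomputable section

/-- The Ψ-set of Γ_log. -/
def PsiSet : Set GammaLog := psiL '' {α : GammaLog | α ≠ 0}

lemma lt_iff' {a b : GammaLog} :
    a < b ↔ ∃ j, (∀ d < j, ofLex a d = ofLex b d) ∧ ofLex a j < ofLex b j :=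
  Finsupp.lex_def

lemma chiI_strictMono : StrictMono chiI := by
  intro n m h
  rw [lt_iff']
  refine ⟨n + 1, fun d hd => ?_, ?_⟩
  · rw [chiI_apply, chiI_apply, if_pos (by omega), if_pos (by omega)]
  · rw [chiI_apply, chiI_apply, if_neg (by omega), if_pos (by omega)]; norm_num

lemma chiI_lt_chiI {n m : ℕ} : chiI n < chiI m ↔ n < m := chiI_strictMono.lt_iff_lt

lemma nuOne_chiI (n : ℕ) : nuOne (chiI n) = n + 1 := by
  have h : {m : ℕ | ofLex (chiI n) m ≠ 1} = Set.Ici (n + 1) := by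
    ext m
    simp only [Set.mem_setOf_eq, chiI_apply, Set.mem_Ici]
    split <;> simp <;> omega
  rw [nuOne, h, csInf_Ici]

lemma intL_chiI (n : ℕ) : intL (chiI n) = toLex (-Finsupp.single (n + 1) 1) := by
  rw [intL, nuOne_chiI]
  refine ofLex.injective ?_
  ext m
  have h1 := chiI_apply n m
  have h2 := chiI_apply (n + 1) m
  have : ofLex (chiI n - chiI (n + 1)) m = ofLex (chiI n) m - ofLex (chiI (n + 1)) m := rfl
  rw [this, h1, h2]
  simp [Finsupp.single_apply]
  split_ifs <;> simp_all <;> omega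

lemma psiL_single (k : ℕ) (c : ℝ) (hc : c ≠ 0) : psiL (toLex (Finsupp.single k c)) = chiI k := by
  have h : {n : ℕ | ofLex (toLex (Finsupp.single k c)) n ≠ 0} = {k} := by
    ext m
    simp [Finsupp.single_apply]
    constructor
    · rintro ⟨h, -⟩; omega
    · rintro rfl; exact ⟨rfl, hc⟩
  rw [psiL, h, csInf_singleton]

lemma sL_chiI (n : ℕ) : sL (chiI n) = chiI (n + 1) := by
  have : (toLex (-Finsupp.single (n+1) (1:ℝ))) = toLex (Finsupp.single (n+1) (-1:ℝ)) := by
    simp [Finsupp.single_neg]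
  rw [sL, intL_chiI, this, psiL_single _ _ (by norm_num)]

lemma PsiSet_eq : PsiSet = Set.range chiI := by
  apply Set.Subset.antisymm
  · rintro _ ⟨α, -, rfl⟩; exact ⟨_, rfl⟩
  · rintro _ ⟨n, rfl⟩
    refine ⟨toLex (Finsupp.single n 1), ?_, psiL_single n 1 one_ne_zero⟩
    simp only [Set.mem_setOf_eq]
    intro h
    have := congrArg (fun a : GammaLog => ofLex a n) h
    simp [Finsupp.single_apply] at this

lemma sL_zero : sL 0 = chiI 0 := by
  have h0 : nuOne (0 : GammaLog) = 0 := by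
    rw [nuOne]
    have : (0:ℕ) ∈ {n : ℕ | ofLex (0 : GammaLog) n ≠ 1} := by simp
    exact Nat.eq_zero_of_le_zero (Nat.sInf_le this)
  have : intL (0 : GammaLog) = toLex (Finsupp.single 0 (-1 : ℝ)) := by
    rw [intL, h0]
    refine ofLex.injective ?_
    ext m
    have : ofLex ((0:GammaLog) - chiI 0) m = 0 - ofLex (chiI 0) m := rfl
    rw [this, chiI_apply]
    simp only [ofLex_toLex, Finsupp.single_apply]
    split_ifs <;> simp_all
  rw [sL, this, psiL_single _ _ (by norm_num)]

/-- s(χ_[0,n]) = χ_[0,n+1]; for α ∈ Ψ, s(α) is the immediate successor of α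
in Ψ; and s restricts to a bijection from Ψ onto {β ∈ Ψ : β > s(0)}.
(Together with the other verified axioms this makes (Γ_log, ψ) a model of
T_log.) -/
theorem sL_successor :
    (∀ n : ℕ, sL (chiI n) = chiI (n + 1)) ∧
    (∀ α ∈ PsiSet, α < sL α ∧ sL α ∈ PsiSet ∧
      ¬ ∃ β ∈ PsiSet, α < β ∧ β < sL α) ∧
    Set.BijOn sL PsiSet {β ∈ PsiSet | sL 0 < β} := by
  refine ⟨sL_chiI, ?_, ?_, ?_, ?_⟩
  · intro α hα
    rw [PsiSet_eq] at hα; obtain ⟨n, rfl⟩ := hα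
    rw [sL_chiI]
    refine ⟨chiI_lt_chiI.mpr (by omega), by rw [PsiSet_eq]; exact ⟨n + 1, rfl⟩, ?_⟩
    rintro ⟨β, hβ, h1, h2⟩
    rw [PsiSet_eq] at hβ; obtain ⟨m, rfl⟩ := hβ
    rw [chiI_lt_chiI] at h1 h2; omega
  · intro α hα
    rw [PsiSet_eq] at hα; obtain ⟨n, rfl⟩ := hα
    rw [sL_chiI]
    exact ⟨by rw [PsiSet_eq]; exact ⟨n + 1, rfl⟩,
      by rw [sL_zero]; exact chiI_lt_chiI.mpr (by omega)⟩
  · intro a ha b hb h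
    rw [PsiSet_eq] at ha hb
    obtain ⟨n, rfl⟩ := ha; obtain ⟨m, rfl⟩ := hb
    rw [sL_chiI, sL_chiI] at h
    have := chiI_strictMono.injective h
    congr 1
    omega
  · intro β hβ
    obtain ⟨hΨ, hlt⟩ := hβ
    rw [PsiSet_eq] at hΨ; obtain ⟨m, rfl⟩ := hΨ
    rw [sL_zero, chiI_lt_chiI] at hlt
    refine ⟨chiI (m - 1), by rw [PsiSet_eq]; exact ⟨m - 1, rfl⟩, ?_⟩
    rw [sL_chiI]; congr 1; omega
end
end

section
/- Let (Γ, ψ) be an H-asymptotic couple with Γ divisible, let Γ_0 be a divisible subgroup of Γ, and let c_1, …, c_m ∈ Γ ∖ Γ_0. Set Γ_1 := Γ_0 + ℚc_1 + ⋯ + ℚc_m. Then the set ψ(Γ_1 ∖ {0}) ∖ ψ(Γ_0 ∖ {0}) has at most m elements. -/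
/-!
Like a valuation, `ψ` satisfies `ψ(qα) = ψ(α)` for rational `q ≠ 0`, and
`ψ(α - β) = ψ(α)` whenever `ψ(α) < ψ(β)`. Adjoining one element `a` to a divisible subgroup `S`
therefore creates at most one new value: after rescaling, a nonzero element of `S + ℚa` outside
`S` lies in the coset `S + a`, and of two elements of that coset with different values, the
smaller value is the value of their difference, which lies in `S`. Induction on `m` finishes.
-/

open Submodule

def psiImage {Γ Λ : Type*} [AddCommGroup Γ] [Module ℚ Γ] (ψ : Γ → Λ) (S : Submodule ℚ Γ) :
    Set Λ :=
  ψ '' {x | x ∈ S ∧ x ≠ 0}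

lemma Submodule.mem_sup_span_range_iff {R M ι : Type*} [Semiring R] [AddCommMonoid M]
    [Module R M] [Fintype ι] (S : Submodule R M) (c : ι → M) (x : M) :
    x ∈ S ⊔ span R (Set.range c) ↔ ∃ γ ∈ S, ∃ q : ι → R, x = γ + ∑ i, q i • c i := by
  simp only [mem_sup, mem_span_range_iff_exists_fun, eq_comm (a := x)]
  constructor
  · rintro ⟨γ, hγ, _, ⟨q, rfl⟩, rfl⟩
    exact ⟨γ, hγ, q, rfl⟩
  · rintro ⟨γ, hγ, q, rfl⟩
    exact ⟨γ, hγ, _, ⟨q, rfl⟩, rfl⟩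

section ValuationLike

variable {Γ Λ : Type*} [AddCommGroup Γ] {ψ : Γ → Λ}

lemma psi_neg (hAC2 : ∀ α : Γ, α ≠ 0 → ∀ k : ℤ, k ≠ 0 → ψ (k • α) = ψ α)
    {α : Γ} (hα : α ≠ 0) : ψ (-α) = ψ α := by
  simpa using hAC2 α hα (-1) (by norm_num)

lemma psi_rat_smul [Module ℚ Γ] (hAC2 : ∀ α : Γ, α ≠ 0 → ∀ k : ℤ, k ≠ 0 → ψ (k • α) = ψ α)
    {q : ℚ} (hq : q ≠ 0) {x : Γ} (hx : x ≠ 0) : ψ (q • x) = ψ x := by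
  have hden : (q.den : ℤ) • (q • x) = q.num • x := by
    rw [← Int.cast_smul_eq_zsmul ℚ, ← Int.cast_smul_eq_zsmul ℚ, smul_smul]
    norm_cast
    rw [Rat.den_mul_eq_num, Int.cast_smul_eq_zsmul]
  rw [← hAC2 (q • x) (smul_ne_zero hq hx) q.den (by exact_mod_cast q.den_ne_zero), hden,
    hAC2 x hx q.num (Rat.num_ne_zero.2 hq)]

variable [LinearOrder Λ]

lemma psi_sub_of_lt (hAC1 : ∀ α β : Γ, α ≠ 0 → β ≠ 0 → α + β ≠ 0 → min (ψ α) (ψ β) ≤ ψ (α + β))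
    (hAC2 : ∀ α : Γ, α ≠ 0 → ∀ k : ℤ, k ≠ 0 → ψ (k • α) = ψ α)
    {α β : Γ} (hα : α ≠ 0) (hβ : β ≠ 0) (hlt : ψ α < ψ β) : ψ (α - β) = ψ α := by
  have hαβ : α - β ≠ 0 := sub_ne_zero.2 (by rintro rfl; exact hlt.false)
  have hge : ψ α ≤ ψ (α - β) := by
    simpa [sub_eq_add_neg, psi_neg hAC2 hβ, hlt.le] using
      hAC1 α (-β) hα (neg_ne_zero.2 hβ) (by rwa [← sub_eq_add_neg])
  have hle : min (ψ (α - β)) (ψ β) ≤ ψ α := by simpa using hAC1 (α - β) β hαβ hβ (by simpa)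
  exact le_antisymm ((min_le_iff.1 hle).resolve_right hlt.not_ge) hge

variable [Module ℚ Γ]
  (hAC1 : ∀ α β : Γ, α ≠ 0 → β ≠ 0 → α + β ≠ 0 → min (ψ α) (ψ β) ≤ ψ (α + β))
  (hAC2 : ∀ α : Γ, α ≠ 0 → ∀ k : ℤ, k ≠ 0 → ψ (k • α) = ψ α)
include hAC1 hAC2

/-- If `ψ x < ψ y` then `ψ x = ψ (x - y)`, which is already a value on `S`. -/
lemma psi_eq_of_sub_mem_of_notMem_psiImage {S : Submodule ℚ Γ} {x y : Γ} (hx : x ≠ 0)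
    (hy : y ≠ 0) (hxy : x - y ∈ S) (hxS : ψ x ∉ psiImage ψ S) (hyS : ψ y ∉ psiImage ψ S) :
    ψ x = ψ y := by
  rcases lt_trichotomy (ψ x) (ψ y) with hlt | heq | hgt
  · refine absurd ⟨x - y, ⟨hxy, ?_⟩, psi_sub_of_lt hAC1 hAC2 hx hy hlt⟩ hxS
    exact sub_ne_zero.2 (by rintro rfl; exact hlt.false)
  · exact heq
  · refine absurd ⟨y - x, ⟨?_, ?_⟩, psi_sub_of_lt hAC1 hAC2 hy hx hgt⟩ hyS
    · simpa using S.neg_mem hxy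
    · exact sub_ne_zero.2 (by rintro rfl; exact hgt.false)

lemma subsingleton_psiImage_sup_span_singleton_diff (S : Submodule ℚ Γ) (a : Γ) :
    (psiImage ψ (S ⊔ span ℚ {a}) \ psiImage ψ S).Subsingleton := by
  have key : ∀ x ∈ S ⊔ span ℚ {a}, x ≠ 0 → ψ x ∉ psiImage ψ S →
      ∃ γ ∈ S, ∃ q : ℚ, q ≠ 0 ∧ x = γ + q • a := by
    intro x hx hx0 hxS
    obtain ⟨γ, hγ, _, hs, rfl⟩ := mem_sup.1 hx
    obtain ⟨q, rfl⟩ := mem_span_singleton.1 hs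
    refine ⟨γ, hγ, q, ?_, rfl⟩
    rintro rfl
    exact hxS ⟨γ + (0 : ℚ) • a, ⟨by simpa using hγ, hx0⟩, rfl⟩
  rintro _ ⟨⟨x, ⟨hx, hx0⟩, rfl⟩, hxS⟩ _ ⟨⟨y, ⟨hy, hy0⟩, rfl⟩, hyS⟩
  obtain ⟨γ, hγ, q, hq, rfl⟩ := key x hx hx0 hxS
  obtain ⟨δ, hδ, r, hr, rfl⟩ := key y hy hy0 hyS
  -- rescale `y` so that its `a`-coordinate matches that of `x`
  have hscale := psi_rat_smul hAC2 (div_ne_zero hq hr) hy0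
  rw [← hscale] at hyS ⊢
  refine psi_eq_of_sub_mem_of_notMem_psiImage hAC1 hAC2 hx0
    (smul_ne_zero (div_ne_zero hq hr) hy0) ?_ hxS hyS
  have : γ + q • a - (q / r) • (δ + r • a) = γ - (q / r) • δ := by
    rw [smul_add, smul_smul, div_mul_cancel₀ q hr]; abel
  rw [this]
  exact S.sub_mem hγ (S.smul_mem _ hδ)

lemma encard_psiImage_sup_span_diff_le [DecidableEq Γ] (S : Submodule ℚ Γ) (s : Finset Γ) :
    (psiImage ψ (S ⊔ span ℚ s) \ psiImage ψ S).encard ≤ s.card := by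
  induction s using Finset.induction_on with
  | empty => simp
  | insert a s has ih =>
    have hsup : S ⊔ span ℚ ↑(insert a s) = (S ⊔ span ℚ s) ⊔ span ℚ {a} := by
      rw [Finset.coe_insert, span_insert, sup_comm (span ℚ {a}), sup_assoc]
    have hstep := subsingleton_psiImage_sup_span_singleton_diff hAC1 hAC2 (S ⊔ span ℚ s) a
    calc _ ≤ (psiImage ψ (S ⊔ span ℚ ↑(insert a s)) \ psiImage ψ (S ⊔ span ℚ s)).encard
          + (psiImage ψ (S ⊔ span ℚ s) \ psiImage ψ S).encard :=
          (Set.encard_le_encard (sdiff_triangle _ _ _)).trans (Set.encard_union_le _ _)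
      _ ≤ 1 + s.card := by
          rw [hsup]
          exact add_le_add (Set.encard_le_one_iff_subsingleton.2 hstep) ih
      _ = (insert a s).card := by rw [Finset.card_insert_of_notMem has]; push_cast; ring

lemma encard_psiImage_sup_span_range_diff_le (S : Submodule ℚ Γ) {m : ℕ} (c : Fin m → Γ) :
    (psiImage ψ (S ⊔ span ℚ (Set.range c)) \ psiImage ψ S).encard ≤ m := by
  classical
  have hrange : Set.range c = ↑(Finset.univ.image c) := by simp
  calc _ ≤ ((Finset.univ.image c).card : ℕ∞) := by
          rw [hrange]; exact encard_psiImage_sup_span_diff_le hAC1 hAC2 S _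
    _ ≤ m := by exact_mod_cast Finset.card_image_le.trans (Finset.card_fin m).le

end ValuationLike

theorem finite_psi_extension_general
    {Γ : Type*} [AddCommGroup Γ] [LinearOrder Γ] [Module ℚ Γ]
    (ψ : Γ → Γ)
    (hAC1 : ∀ α β : Γ, α ≠ 0 → β ≠ 0 → α + β ≠ 0 → min (ψ α) (ψ β) ≤ ψ (α + β))
    (hAC2 : ∀ α : Γ, α ≠ 0 → ∀ k : ℤ, k ≠ 0 → ψ (k • α) = ψ α)
    (Γ0 : Submodule ℚ Γ) (m : ℕ) (c : Fin m → Γ) :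
    (ψ '' {x | (∃ γ ∈ Γ0, ∃ q : Fin m → ℚ, x = γ + ∑ i, q i • c i) ∧ x ≠ 0} \
        ψ '' {x | x ∈ Γ0 ∧ x ≠ 0}).Finite ∧
    (ψ '' {x | (∃ γ ∈ Γ0, ∃ q : Fin m → ℚ, x = γ + ∑ i, q i • c i) ∧ x ≠ 0} \
        ψ '' {x | x ∈ Γ0 ∧ x ≠ 0}).ncard ≤ m := by
  simp_rw [← Submodule.mem_sup_span_range_iff]
  have h := encard_psiImage_sup_span_range_diff_le hAC1 hAC2 Γ0 c
  exact ⟨Set.finite_of_encard_le_coe h, by exact_mod_cast (Set.ncard_le_encard _).trans h⟩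

/-- Let (Γ, ψ) be an H-asymptotic couple with Γ divisible (equivalently, a
ℚ-vector space), Γ_0 a divisible subgroup (= ℚ-submodule), and
c_1, …, c_m ∈ Γ ∖ Γ_0.  Then ψ((Γ_0 + ℚc_1 + ⋯ + ℚc_m) ∖ {0}) ∖ ψ(Γ_0 ∖ {0})
has at most m elements. -/
theorem finite_psi_extension
    {Γ : Type*} [AddCommGroup Γ] [LinearOrder Γ] [IsOrderedAddMonoid Γ] [Module ℚ Γ]
    (ψ : Γ → Γ)
    (hAC1 : ∀ α β : Γ, α ≠ 0 → β ≠ 0 → α + β ≠ 0 → min (ψ α) (ψ β) ≤ ψ (α + β))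
    (hAC2 : ∀ α : Γ, α ≠ 0 → ∀ k : ℤ, k ≠ 0 → ψ (k • α) = ψ α)
    (hAC3 : ∀ α β : Γ, 0 < α → β ≠ 0 → ψ β < α + ψ α)
    (hHC : ∀ α β : Γ, 0 < α → α ≤ β → ψ β ≤ ψ α)
    (Γ0 : Submodule ℚ Γ) (m : ℕ) (c : Fin m → Γ) (hc : ∀ i, c i ∉ Γ0) :
    (ψ '' {x | (∃ γ ∈ Γ0, ∃ q : Fin m → ℚ, x = γ + ∑ i, q i • c i) ∧ x ≠ 0} \
        ψ '' {x | x ∈ Γ0 ∧ x ≠ 0}).Finite ∧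
    (ψ '' {x | (∃ γ ∈ Γ0, ∃ q : Fin m → ℚ, x = γ + ∑ i, q i • c i) ∧ x ≠ 0} \
        ψ '' {x | x ∈ Γ0 ∧ x ≠ 0}).ncard ≤ m :=
  finite_psi_extension_general ψ hAC1 hAC2 Γ0 m c
end

section
/- Let (Γ, ψ) be an H-asymptotic couple with Γ divisible and with asymptotic integration, let Γ_0 be a divisible subgroup of Γ such that ψ(Γ_0 ∖ {0}) ⊆ Γ_0 and s(Γ_0) ⊆ Γ_0, and let c_1, …, c_m ∈ Γ ∖ Γ_0. Set Γ_1 := Γ_0 + ℚc_1 + ⋯ + ℚc_m. Then the set s(Γ_1) ∖ s(Γ_0) has at most m + 1 elements. -/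
/-!
Write `s α = ψ (∫ α)`. If `s α < s α'`, then `ψ (∫ α - ∫ α') = s α` by (AC1), and (AC3) at half of
`|∫ α - ∫ α'|` shows that `|s α - s α'|` is less than that half; since
`α - α' = (∫ α - ∫ α') + (s α - s α')`, (HC) gives `ψ (α - α') = s α`. So every value of `s` on `Γ₁`
other than its maximum is a ψ-value of a nonzero element of `Γ₁`, and it is not a ψ-value of a
nonzero element of `Γ₀`, because `s (γ + ψ γ) = ψ γ`. It remains to count ψ-values: adjoining
one element `c` to a subspace `Δ` creates at most one new one, since if `x = γ + q c` and
`y = δ + p c` have ψ-values outside `ψ (Δ ∖ {0})`, then `q⁻¹ x - p⁻¹ y ∈ Δ` forces `ψ x = ψ y`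
by (AC1).
-/

theorem exists_smul_sub_mem_of_mem_sup_span_singleton {K V : Type*} [DivisionRing K]
    [AddCommGroup V] [Module K V] {Δ : Submodule K V} {c x : V}
    (hx : x ∈ Δ ⊔ Submodule.span K {c}) (hxΔ : x ∉ Δ) : ∃ q : K, q ≠ 0 ∧ q • x - c ∈ Δ := by
  obtain ⟨γ, hγ, z, hz, rfl⟩ := Submodule.mem_sup.mp hx
  obtain ⟨q, rfl⟩ := Submodule.mem_span_singleton.mp hz
  have hq : q ≠ 0 := by
    rintro rfl
    exact hxΔ (by simpa using hγ)
  refine ⟨q⁻¹, inv_ne_zero hq, ?_⟩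
  rw [smul_add, smul_smul, inv_mul_cancel₀ hq, one_smul, add_sub_cancel_right]
  exact Δ.smul_mem _ hγ

namespace AsymptoticCouple

variable {Γ : Type*} [AddCommGroup Γ] {ψ : Γ → Γ}

variable (ψ) in
def AC2 : Prop := ∀ α : Γ, α ≠ 0 → ∀ k : ℤ, k ≠ 0 → ψ (k • α) = ψ α

variable (ψ) in
def psiValues (Δ : Set Γ) : Set Γ := ψ '' (Δ \ {0})

theorem psi_neg (h2 : AC2 ψ) {x : Γ} (hx : x ≠ 0) : ψ (-x) = ψ x := by
  simpa using h2 x hx (-1) (by norm_num)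

theorem psi_two_nsmul (h2 : AC2 ψ) {x : Γ} (hx : x ≠ 0) : ψ (2 • x) = ψ x := by
  simpa [two_zsmul, two_nsmul] using h2 x hx 2 two_ne_zero

theorem psi_qsmul [Module ℚ Γ] (h2 : AC2 ψ) {q : ℚ} (hq : q ≠ 0) {x : Γ} (hx : x ≠ 0) :
    ψ (q • x) = ψ x := by
  have hnum : (q.den : ℤ) • (q • x) = q.num • x := by
    rw [← Int.cast_smul_eq_zsmul ℚ, ← Int.cast_smul_eq_zsmul ℚ, smul_smul]
    push_cast
    rw [mul_comm, Rat.mul_den_eq_num]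
  rw [← h2 _ (smul_ne_zero hq hx) _ (Int.natCast_ne_zero.mpr q.den_nz), hnum,
    h2 x hx _ (Rat.num_ne_zero.mpr hq)]

variable [LinearOrder Γ]

variable (ψ) in
def AC1 : Prop := ∀ α β : Γ, α ≠ 0 → β ≠ 0 → α + β ≠ 0 → min (ψ α) (ψ β) ≤ ψ (α + β)

theorem psi_abs (h2 : AC2 ψ) {x : Γ} (hx : x ≠ 0) : ψ |x| = ψ x := by
  rcases abs_choice x with h | h <;> rw [h]
  exact psi_neg h2 hx

theorem psi_sub_eq_of_psi_lt (h1 : AC1 ψ) (h2 : AC2 ψ) {x y : Γ} (hx : x ≠ 0) (hy : y ≠ 0)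
    (h : ψ x < ψ y) : x - y ≠ 0 ∧ ψ (x - y) = ψ x := by
  have hxy : x - y ≠ 0 := fun h0 => h.ne (by rw [sub_eq_zero.mp h0])
  refine ⟨hxy, le_antisymm ?_ ?_⟩
  · have := h1 (x - y) y hxy hy (by simpa using hx)
    rw [sub_add_cancel] at this
    exact (min_le_iff.mp this).resolve_right h.not_ge
  · simpa [psi_neg h2 hy, h.le, ← sub_eq_add_neg] using h1 x (-y) hx (neg_ne_zero.mpr hy)
      (by simpa [← sub_eq_add_neg] using hxy)

theorem psi_eq_of_sub_mem {S : Type*} [SetLike S Γ] [AddSubgroupClass S Γ] (h1 : AC1 ψ)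
    (h2 : AC2 ψ) {Δ : S} {x y : Γ} (hx : x ≠ 0) (hy : y ≠ 0) (hxy : x - y ∈ Δ)
    (hψx : ψ x ∉ psiValues ψ Δ) (hψy : ψ y ∉ psiValues ψ Δ) : ψ x = ψ y := by
  rcases lt_trichotomy (ψ x) (ψ y) with h | h | h
  · obtain ⟨hne, heq⟩ := psi_sub_eq_of_psi_lt h1 h2 hx hy h
    exact absurd ⟨x - y, ⟨hxy, hne⟩, heq⟩ hψx
  · exact h
  · obtain ⟨hne, heq⟩ := psi_sub_eq_of_psi_lt h1 h2 hy hx h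
    exact absurd ⟨y - x, ⟨sub_mem_comm_iff.mp hxy, hne⟩, heq⟩ hψy

section Divisible

variable [Module ℚ Γ]

theorem psiValues_sup_span_singleton_diff_subsingleton (h1 : AC1 ψ) (h2 : AC2 ψ)
    (Δ : Submodule ℚ Γ) (c : Γ) :
    (psiValues ψ ↑(Δ ⊔ Submodule.span ℚ {c}) \ psiValues ψ Δ).Subsingleton := by
  have not_mem {z : Γ} (hz : z ≠ 0) (hψz : ψ z ∉ psiValues ψ Δ) : z ∉ Δ :=
    fun hzΔ => hψz ⟨z, ⟨hzΔ, hz⟩, rfl⟩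
  rintro _ ⟨⟨x, ⟨hx, hx0⟩, rfl⟩, hψx⟩ _ ⟨⟨y, ⟨hy, hy0⟩, rfl⟩, hψy⟩
  obtain ⟨p, hp, hpx⟩ := exists_smul_sub_mem_of_mem_sup_span_singleton hx (not_mem hx0 hψx)
  obtain ⟨q, hq, hqy⟩ := exists_smul_sub_mem_of_mem_sup_span_singleton hy (not_mem hy0 hψy)
  rw [← psi_qsmul h2 hp hx0] at hψx ⊢
  rw [← psi_qsmul h2 hq hy0] at hψy ⊢
  refine psi_eq_of_sub_mem h1 h2 (smul_ne_zero hp hx0) (smul_ne_zero hq hy0) ?_ hψx hψy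
  simpa using sub_mem hpx hqy

theorem encard_psiValues_sup_span_diff_le (h1 : AC1 ψ) (h2 : AC2 ψ) (Δ : Submodule ℚ Γ)
    (S : Finset Γ) :
    (psiValues ψ ↑(Δ ⊔ Submodule.span ℚ S) \ psiValues ψ Δ).encard ≤ S.card := by
  classical
  induction S using Finset.induction_on with
  | empty => simp
  | insert a S ha ih =>
    set Δ' := Δ ⊔ Submodule.span ℚ (S : Set Γ)
    have hsup : Δ ⊔ Submodule.span ℚ ↑(insert a S) = Δ' ⊔ Submodule.span ℚ {a} := by
      rw [Finset.coe_insert, Submodule.span_insert, sup_comm (Submodule.span ℚ {a}), ← sup_assoc]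
    rw [hsup, Finset.card_insert_of_notMem ha, Nat.cast_succ, add_comm]
    calc _ ≤ _ := Set.encard_le_encard (sdiff_triangle _ (psiValues ψ Δ') _)
      _ ≤ _ := Set.encard_union_le _ _
      _ ≤ 1 + S.card := add_le_add (Set.encard_le_one_iff_subsingleton.mpr
          (psiValues_sup_span_singleton_diff_subsingleton h1 h2 Δ' a)) ih

end Divisible

variable [IsOrderedAddMonoid Γ]

variable (ψ) in
def AC3 : Prop := ∀ α β : Γ, 0 < α → β ≠ 0 → ψ β < α + ψ α

variable (ψ) in
def HC : Prop := ∀ α β : Γ, 0 < α → α ≤ β → ψ β ≤ ψ α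

variable (ψ) in
def IsIntegrationMap (I : Γ → Γ) : Prop := ∀ α : Γ, I α ≠ 0 ∧ I α + ψ (I α) = α

theorem psi_le_of_abs_le (h2 : AC2 ψ) (hH : HC ψ) {x y : Γ} (hx : x ≠ 0) (h : |x| ≤ |y|) :
    ψ y ≤ ψ x := by
  have hy : y ≠ 0 := by
    rintro rfl
    exact hx (abs_nonpos_iff.mp (by simpa using h))
  rw [← psi_abs h2 hx, ← psi_abs h2 hy]
  exact hH |x| |y| (abs_pos.mpr hx) h

theorem psi_eq_of_abs_le_two_nsmul (h2 : AC2 ψ) (hH : HC ψ) {x y : Γ} (hx : x ≠ 0) (hy : y ≠ 0)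
    (hxy : |x| ≤ 2 • |y|) (hyx : |y| ≤ 2 • |x|) : ψ x = ψ y := by
  rw [← abs_nsmul] at hxy hyx
  refine le_antisymm ?_ ?_
  · simpa [psi_two_nsmul h2 hx] using psi_le_of_abs_le h2 hH hy hyx
  · simpa [psi_two_nsmul h2 hy] using psi_le_of_abs_le h2 hH hx hxy

theorem psi_add_eq_of_two_nsmul_abs_lt (h2 : AC2 ψ) (hH : HC ψ) {x e : Γ} (hx : x ≠ 0)
    (h : 2 • |e| < |x|) : x + e ≠ 0 ∧ ψ (x + e) = ψ x := by
  rw [two_nsmul] at h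
  have hx_le : |x| ≤ |x + e| + |e| := by simpa using abs_sub (x + e) e
  have he_lt : |e| < |x + e| := lt_of_add_lt_add_right (h.trans_le hx_le)
  have hxe : x + e ≠ 0 := fun h0 => (abs_nonneg e).not_gt (by simpa [h0] using he_lt)
  refine ⟨hxe, psi_eq_of_abs_le_two_nsmul h2 hH hxe hx ?_ ?_⟩
  · rw [two_nsmul]
    exact (abs_add_le x e).trans
      (add_le_add_right ((le_add_of_nonneg_left (abs_nonneg e)).trans h.le) _)
  · rw [two_nsmul]
    exact hx_le.trans (add_le_add_right he_lt.le _)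

theorem strictMonoOn_add_psi (h1 : AC1 ψ) (h2 : AC2 ψ) (h3 : AC3 ψ) :
    StrictMonoOn (fun β => β + ψ β) {0}ᶜ := by
  intro x hx y hy hxy
  rcases lt_trichotomy (ψ x) (ψ y) with h | h | h
  · exact add_lt_add hxy h
  · simpa [h] using hxy
  · have hgap := h3 (y - x) x (sub_pos.mpr hxy) hx
    rw [(psi_sub_eq_of_psi_lt h1 h2 hy hx h).2] at hgap
    calc x + ψ x < x + (y - x + ψ y) := add_lt_add_right hgap x
      _ = y + ψ y := by abel

theorem integral_add_psi (h1 : AC1 ψ) (h2 : AC2 ψ) (h3 : AC3 ψ) {I : Γ → Γ}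
    (hI : IsIntegrationMap ψ I) {γ : Γ} (hγ : γ ≠ 0) : I (γ + ψ γ) = γ :=
  (strictMonoOn_add_psi h1 h2 h3).injOn (hI _).1 hγ (hI _).2

theorem psiValues_subset_image_psi_integral (h1 : AC1 ψ) (h2 : AC2 ψ) (h3 : AC3 ψ)
    {I : Γ → Γ} (hI : IsIntegrationMap ψ I) {Δ : AddSubmonoid Γ}
    (hψΔ : ∀ γ ∈ Δ, γ ≠ 0 → ψ γ ∈ Δ) : psiValues ψ Δ ⊆ (fun α => ψ (I α)) '' Δ := by
  rintro _ ⟨γ, ⟨hγΔ, hγ⟩, rfl⟩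
  exact ⟨γ + ψ γ, add_mem hγΔ (hψΔ γ hγΔ hγ), by simp only [integral_add_psi h1 h2 h3 hI hγ]⟩

section Divisible

variable [Module ℚ Γ]

theorem psi_sub_eq_psi_integral_of_lt (h1 : AC1 ψ) (h2 : AC2 ψ) (h3 : AC3 ψ) (hH : HC ψ)
    {I : Γ → Γ} (hI : IsIntegrationMap ψ I) {α α' : Γ} (h : ψ (I α) < ψ (I α')) :
    α - α' ≠ 0 ∧ ψ (α - α') = ψ (I α) := by
  obtain ⟨hβ, hα⟩ := hI α
  obtain ⟨hβ', hα'⟩ := hI α'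
  obtain ⟨hδ, hψδ⟩ := psi_sub_eq_of_psi_lt h1 h2 hβ hβ' h
  set η : Γ := (2 : ℚ)⁻¹ • |I α - I α'|
  have hη : 2 • η = |I α - I α'| := by
    rw [← Nat.cast_smul_eq_nsmul ℚ, smul_smul]
    norm_num
  have hη_pos : 0 < η := (nsmul_pos_iff two_ne_zero).mp (hη ▸ abs_pos.mpr hδ)
  have hψη : ψ η = ψ (I α) := by
    rw [psi_qsmul h2 (by norm_num) (abs_ne_zero.mpr hδ), psi_abs h2 hδ, hψδ]
  have hgap : |ψ (I α) - ψ (I α')| < η := by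
    rw [abs_sub_comm, abs_of_pos (sub_pos.mpr h), sub_lt_iff_lt_add, ← hψη]
    exact h3 η (I α') hη_pos hβ'
  have hsplit : α - α' = (I α - I α') + (ψ (I α) - ψ (I α')) := by
    calc α - α' = (I α + ψ (I α)) - (I α' + ψ (I α')) := by rw [hα, hα']
      _ = _ := by abel
  obtain ⟨hne, heq⟩ := psi_add_eq_of_two_nsmul_abs_lt h2 hH hδ
    (hη ▸ nsmul_lt_nsmul_right two_ne_zero hgap)
  exact ⟨hsplit ▸ hne, by rw [hsplit, heq, hψδ]⟩

theorem image_psi_integral_diff_subset (h1 : AC1 ψ) (h2 : AC2 ψ) (h3 : AC3 ψ) (hH : HC ψ)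
    {I : Γ → Γ} (hI : IsIntegrationMap ψ I) {Δ M : Submodule ℚ Γ}
    (hψΔ : ∀ γ ∈ Δ, γ ≠ 0 → ψ γ ∈ Δ) {A : Set Γ} (hA : A ⊆ M) :
    (fun α => ψ (I α)) '' A \ (fun α => ψ (I α)) '' Δ ⊆
      (psiValues ψ M \ psiValues ψ Δ) ∪ {x | IsGreatest ((fun α => ψ (I α)) '' A) x} := by
  rintro _ ⟨⟨α, hα, rfl⟩, hαΔ⟩
  by_cases hmax : IsGreatest ((fun α => ψ (I α)) '' A) (ψ (I α))
  · exact Or.inr hmax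
  have hnot : ψ (I α) ∉ upperBounds ((fun α => ψ (I α)) '' A) := fun h => hmax ⟨⟨α, hα, rfl⟩, h⟩
  simp only [mem_upperBounds, not_forall, not_le] at hnot
  obtain ⟨_, ⟨α', hα', rfl⟩, hlt⟩ := hnot
  obtain ⟨hne, heq⟩ := psi_sub_eq_psi_integral_of_lt h1 h2 h3 hH hI hlt
  refine Or.inl ⟨⟨α - α', ⟨sub_mem (hA hα) (hA hα'), hne⟩, heq⟩, fun hΔ => hαΔ ?_⟩
  exact psiValues_subset_image_psi_integral h1 h2 h3 hI (Δ := Δ.toAddSubmonoid) hψΔ hΔ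

end Divisible

end AsymptoticCouple

open AsymptoticCouple in
theorem finite_s_extension_general
    {Γ : Type*} [AddCommGroup Γ] [LinearOrder Γ] [IsOrderedAddMonoid Γ] [Module ℚ Γ]
    (ψ : Γ → Γ)
    (hAC1 : ∀ α β : Γ, α ≠ 0 → β ≠ 0 → α + β ≠ 0 → min (ψ α) (ψ β) ≤ ψ (α + β))
    (hAC2 : ∀ α : Γ, α ≠ 0 → ∀ k : ℤ, k ≠ 0 → ψ (k • α) = ψ α)
    (hAC3 : ∀ α β : Γ, 0 < α → β ≠ 0 → ψ β < α + ψ α)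
    (hHC : ∀ α β : Γ, 0 < α → α ≤ β → ψ β ≤ ψ α)
    (I : Γ → Γ) (hI : ∀ α : Γ, I α ≠ 0 ∧ I α + ψ (I α) = α)
    (Γ0 : Submodule ℚ Γ)
    (hψΓ0 : ∀ γ ∈ Γ0, γ ≠ 0 → ψ γ ∈ Γ0)
    (m : ℕ) (c : Fin m → Γ) :
    ((fun α => ψ (I α)) '' {x | ∃ γ ∈ Γ0, ∃ q : Fin m → ℚ, x = γ + ∑ i, q i • c i} \
        (fun α => ψ (I α)) '' (Γ0 : Set Γ)).Finite ∧
    ((fun α => ψ (I α)) '' {x | ∃ γ ∈ Γ0, ∃ q : Fin m → ℚ, x = γ + ∑ i, q i • c i} \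
        (fun α => ψ (I α)) '' (Γ0 : Set Γ)).ncard ≤ m + 1 := by
  classical
  set S := Finset.univ.image c
  have hΓ1 : {x | ∃ γ ∈ Γ0, ∃ q : Fin m → ℚ, x = γ + ∑ i, q i • c i} ⊆
      (Γ0 ⊔ Submodule.span ℚ S : Submodule ℚ Γ) := by
    rintro _ ⟨γ, hγ, q, rfl⟩
    refine add_mem (Submodule.mem_sup_left hγ) (Submodule.sum_mem _ fun i _ => ?_)
    exact Submodule.smul_mem _ _ (Submodule.mem_sup_right (Submodule.subset_span (by simp [S])))
  have hbound := calc
    _ ≤ _ := Set.encard_le_encard (image_psi_integral_diff_subset hAC1 hAC2 hAC3 hHC hI hψΓ0 hΓ1)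
    _ ≤ _ := Set.encard_union_le _ _
    _ ≤ S.card + 1 := add_le_add (encard_psiValues_sup_span_diff_le hAC1 hAC2 Γ0 S)
        (Set.encard_le_one_iff_subsingleton.mpr fun _ hx _ hy => hx.unique hy)
    _ ≤ m + 1 := by
        gcongr
        exact_mod_cast Finset.card_image_le.trans_eq (Finset.card_fin m)
  have hfin := Set.finite_of_encard_le_coe hbound
  exact ⟨hfin, by exact_mod_cast hfin.cast_ncard_eq ▸ hbound⟩

/-- Let (Γ, ψ) be an H-asymptotic couple with Γ divisible and with asymptotic
integration (∫ being the integration map, s(α) := ψ(∫α)), Γ_0 a divisible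
subgroup closed under ψ (on nonzero elements) and under s, and
c_1, …, c_m ∈ Γ ∖ Γ_0.  Then s(Γ_0 + ℚc_1 + ⋯ + ℚc_m) ∖ s(Γ_0) has at most
m + 1 elements. -/
theorem finite_s_extension
    {Γ : Type*} [AddCommGroup Γ] [LinearOrder Γ] [IsOrderedAddMonoid Γ] [Module ℚ Γ]
    (ψ : Γ → Γ)
    (hAC1 : ∀ α β : Γ, α ≠ 0 → β ≠ 0 → α + β ≠ 0 → min (ψ α) (ψ β) ≤ ψ (α + β))
    (hAC2 : ∀ α : Γ, α ≠ 0 → ∀ k : ℤ, k ≠ 0 → ψ (k • α) = ψ α)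
    (hAC3 : ∀ α β : Γ, 0 < α → β ≠ 0 → ψ β < α + ψ α)
    (hHC : ∀ α β : Γ, 0 < α → α ≤ β → ψ β ≤ ψ α)
    (I : Γ → Γ) (hI : ∀ α : Γ, I α ≠ 0 ∧ I α + ψ (I α) = α)
    (Γ0 : Submodule ℚ Γ)
    (hψΓ0 : ∀ γ ∈ Γ0, γ ≠ 0 → ψ γ ∈ Γ0)
    (hsΓ0 : ∀ γ ∈ Γ0, ψ (I γ) ∈ Γ0)
    (m : ℕ) (c : Fin m → Γ) (hc : ∀ i, c i ∉ Γ0) :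
    ((fun α => ψ (I α)) '' {x | ∃ γ ∈ Γ0, ∃ q : Fin m → ℚ, x = γ + ∑ i, q i • c i} \
        (fun α => ψ (I α)) '' (Γ0 : Set Γ)).Finite ∧
    ((fun α => ψ (I α)) '' {x | ∃ γ ∈ Γ0, ∃ q : Fin m → ℚ, x = γ + ∑ i, q i • c i} \
        (fun α => ψ (I α)) '' (Γ0 : Set Γ)).ncard ≤ m + 1 :=
  finite_s_extension_general ψ hAC1 hAC2 hAC3 hHC I hI Γ0 hψΓ0 m c
end
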